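/- Let $m > 2$ be an integer, $r > 0$, $\lambda \in \mathbb{R}$, and let $x > 0$ satisfy $m^4 x^2 + m^2\left(m\lambda - \frac{(m-2)^2}{r^2}\right)x + (m-1)\lambda^2 = 0$. Define $\sigma = \frac{\sqrt{4m^2 x + r^2 \lambda^2}}{m^2 r}$, $\theta = x + \sigma$ and $\omega = x - (m-1)\sigma$. Then $x\left(\frac{m}{r^2} - \lambda - m\theta\right) = \omega(\omega - \theta)$. -/

import Mathlib

/-!
Since `θ - ω = mσ` and `(m - 1)θ + ω = mx`, the terms linear in `σ` cancel and the identity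
reduces to `x(m/r² - λ - mx) = m(m - 1)σ²`. Substituting `σ² = (4m²x + r²λ²)/(m⁴r²)` and
clearing denominators, this is `m⁻³` times the quadratic equation satisfied by `x`, because
`m⁴ - 4m²(m - 1) = m²(m - 2)²`.
-/

lemma mul_sub_eq_mul_sub_iff_of_eigenvalues {m c x σ θ ω : ℝ} (hθ : θ = x + σ)
    (hω : ω = x - (m - 1) * σ) :
    x * (c - m * θ) = ω * (ω - θ) ↔ x * (c - m * x) = m * (m - 1) * σ ^ 2 := by
  subst hθ hω
  constructor <;> intro h <;> linear_combination h

lemma mul_sub_eq_of_quadratic_eq_zero {m r l x : ℝ} (hm : m ≠ 0) (hr : r ≠ 0)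
    (hroot : m ^ 4 * x ^ 2 + m ^ 2 * (m * l - (m - 2) ^ 2 / r ^ 2) * x + (m - 1) * l ^ 2 = 0) :
    x * (m / r ^ 2 - l - m * x) =
      m * (m - 1) * ((4 * m ^ 2 * x + r ^ 2 * l ^ 2) / (m ^ 2 * r) ^ 2) := by
  field_simp at hroot ⊢
  linear_combination -hroot

theorem kappa_identity (m : ℕ) (hm : 2 < m) (r l x : ℝ) (hr : 0 < r) (hx : 0 < x)
    (hroot : (m : ℝ) ^ 4 * x ^ 2 +
        (m : ℝ) ^ 2 * ((m : ℝ) * l - ((m : ℝ) - 2) ^ 2 / r ^ 2) * x +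
        ((m : ℝ) - 1) * l ^ 2 = 0)
    (σ θ ω : ℝ)
    (hσ : σ = Real.sqrt (4 * (m : ℝ) ^ 2 * x + r ^ 2 * l ^ 2) / ((m : ℝ) ^ 2 * r))
    (hθ : θ = x + σ) (hω : ω = x - ((m : ℝ) - 1) * σ) :
    x * ((m : ℝ) / r ^ 2 - l - (m : ℝ) * θ) = ω * (ω - θ) := by
  rw [mul_sub_eq_mul_sub_iff_of_eigenvalues hθ hω, hσ, div_pow, Real.sq_sqrt (by positivity)]
  exact mul_sub_eq_of_quadratic_eq_zero (Nat.cast_ne_zero.2 (by omega)) hr.ne' hroot
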